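/- Let K be a field of characteristic zero and f, g ∈ K[X₁,…,X_n] coprime, not both constant, with d = max(deg f, deg g). If f − T·g is irreducible in Ω[X₁,…,X_n], where Ω is an algebraic closure of K(T), then for all but finitely many λ in the algebraic closure of K, the polynomial f − λg is irreducible of degree d over the algebraic closure of K. -/

import Mathlib

/-!
A factorization of `f - λ g` into non-units has both factors of total degree at most
`deg (f - T g)`. Fixing a non-constant monomial in each factor whose coefficient must not
vanish, such factorizations are the solutions, at `T = λ`, of a polynomial system over `K[T]`
in finitely many unknowns (the coefficients of the two factors) together with one inequation
`c ≠ 0`. Irreducibility over `Ω` says that this system has no solution over `Ω`, so by the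
Nullstellensatz over `K(T)` some power of `c` lies in the ideal of the system over `K(T)`;
clearing denominators, `b(T) c^k` lies in the ideal over `K[T]` for some `b ≠ 0`, and a solution
at `T = λ` forces `b(λ) = 0`. There are finitely many pairs of monomials, hence finitely many
such `λ`. Finally `deg (f - λ g) < d` for at most one `λ`: two of them would give
`deg g < d` and then `deg f < d`.
-/

open MvPolynomial

namespace MvPolynomial

section Degree

variable {σ R L : Type*}

theorem totalDegree_map_le [CommSemiring R] [CommSemiring L] (φ : R →+* L)
    (p : MvPolynomial σ R) : (map φ p).totalDegree ≤ p.totalDegree :=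
  Finset.sup_mono (support_map_subset φ p)

theorem totalDegree_map_of_injective [CommSemiring R] [CommSemiring L] {φ : R →+* L}
    (hφ : Function.Injective φ) (p : MvPolynomial σ R) :
    (map φ p).totalDegree = p.totalDegree := by
  rw [totalDegree, totalDegree, support_map_of_injective _ hφ]

theorem subsingleton_setOf_totalDegree_sub_C_mul_ne [Field L] (p q : MvPolynomial σ L) :
    {t : L | (p - C t * q).totalDegree ≠ max p.totalDegree q.totalDegree}.Subsingleton := by
  have hC : ∀ t (r : MvPolynomial σ L), (C t * r).totalDegree ≤ r.totalDegree := fun t r => by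
    simpa [smul_eq_C_mul] using totalDegree_smul_le t r
  have hlt : ∀ t, (p - C t * q).totalDegree ≠ max p.totalDegree q.totalDegree →
      (p - C t * q).totalDegree < max p.totalDegree q.totalDegree := fun t =>
    ((totalDegree_sub _ _).trans (max_le_max le_rfl (hC t q))).lt_of_ne
  intro t₁ h₁ t₂ h₂
  by_contra hne
  have hq : q = C (t₂ - t₁)⁻¹ * ((p - C t₁ * q) - (p - C t₂ * q)) := by
    rw [show (p - C t₁ * q) - (p - C t₂ * q) = C (t₂ - t₁) * q by rw [map_sub]; ring,
      ← mul_assoc, ← C_mul, inv_mul_cancel₀ (sub_ne_zero.mpr (Ne.symm hne)), C_1, one_mul]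
  have hqlt : q.totalDegree < max p.totalDegree q.totalDegree :=
    (congrArg totalDegree hq).trans_lt ((hC _ _).trans_lt
      ((totalDegree_sub _ _).trans_lt (max_lt (hlt t₁ h₁) (hlt t₂ h₂))))
  have hplt : p.totalDegree < max p.totalDegree q.totalDegree := by
    have hadd := totalDegree_add (p - C t₁ * q) (C t₁ * q)
    rw [sub_add_cancel] at hadd
    exact hadd.trans_lt (max_lt (hlt t₁ h₁) ((hC t₁ q).trans_lt hqlt))
  exact (max_lt hplt hqlt).false

end Degree

section Irreducible

variable {σ R L : Type*}

theorem not_isUnit_of_coeff_ne_zero [CommRing R] [IsReduced R] {P : MvPolynomial σ R}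
    {m : σ →₀ ℕ} (hm : m ≠ 0) (h : coeff m P ≠ 0) : ¬IsUnit P := by
  rw [isUnit_iff_totalDegree_of_isReduced, totalDegree_eq_zero_iff]
  rintro ⟨-, hP⟩
  exact hm (Finsupp.ext (hP m (mem_support_iff.mpr h)))

theorem exists_coeff_ne_zero_of_not_isUnit [Field L] {P : MvPolynomial σ L} (hP : P ≠ 0)
    (hu : ¬IsUnit P) : ∃ m ≠ 0, coeff m P ≠ 0 := by
  by_contra! h
  have hC : P = C (coeff 0 P) := by
    ext m
    rcases eq_or_ne m 0 with rfl | hm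
    · simp
    · classical rw [coeff_C, if_neg (Ne.symm hm), h m hm]
  refine hu (hC ▸ (Ne.isUnit fun h0 => hP ?_).map C)
  rw [hC, h0, C_0]

theorem not_irreducible_of_mul_eq [CommRing R] [IsReduced R] {P Q F : MvPolynomial σ R}
    {m₁ m₂ : σ →₀ ℕ} (hm₁ : m₁ ≠ 0) (hP : coeff m₁ P ≠ 0) (hm₂ : m₂ ≠ 0)
    (hQ : coeff m₂ Q ≠ 0) (h : P * Q = F) : ¬Irreducible F := fun hF =>
  (hF.isUnit_or_isUnit h.symm).elim (not_isUnit_of_coeff_ne_zero hm₁ hP)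
    (not_isUnit_of_coeff_ne_zero hm₂ hQ)

theorem exists_mul_eq_of_not_irreducible [Field L] {F : MvPolynomial σ L}
    (hF : 0 < F.totalDegree) (h : ¬Irreducible F) :
    ∃ P Q : MvPolynomial σ L, P * Q = F ∧ P.totalDegree ≤ F.totalDegree ∧
      Q.totalDegree ≤ F.totalDegree ∧ (∃ m ≠ 0, coeff m P ≠ 0) ∧ ∃ m ≠ 0, coeff m Q ≠ 0 := by
  have hF0 : F ≠ 0 := by rintro rfl; simp at hF
  have hFu : ¬IsUnit F := fun hu => by
    simp [(isUnit_iff_totalDegree_of_isReduced.mp hu).2] at hF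
  obtain ⟨P, Q, rfl, hP, hQ⟩ : ∃ P Q, F = P * Q ∧ ¬IsUnit P ∧ ¬IsUnit Q := by
    simpa [irreducible_iff, hFu] using h
  exact ⟨P, Q, rfl, totalDegree_le_of_dvd_of_isDomain (dvd_mul_right P Q) hF0,
    totalDegree_le_of_dvd_of_isDomain (dvd_mul_left Q P) hF0,
    exists_coeff_ne_zero_of_not_isUnit (left_ne_zero_of_mul hF0) hP,
    exists_coeff_ne_zero_of_not_isUnit (right_ne_zero_of_mul hF0) hQ⟩

end Irreducible

noncomputable section GenericFactor

variable {σ : Type*} (R : Type*) [CommRing R] (B : Finset (σ →₀ ℕ))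

def genericFactor {W : Type*} (v : B → W) : MvPolynomial σ (MvPolynomial W R) :=
  ∑ m : B, monomial (m : σ →₀ ℕ) (X (v m))

def factorizationEquations (F : MvPolynomial σ R) : Set (MvPolynomial (B ⊕ B) R) :=
  Set.range fun μ => coeff μ (genericFactor R B Sum.inl * genericFactor R B Sum.inr - map C F)

variable {R B} {L : Type*} [CommRing L]

theorem map_genericFactor {W : Type*} (v : B → W) (φ : MvPolynomial W R →+* L) :
    map φ (genericFactor R B v) = ∑ m : B, monomial (m : σ →₀ ℕ) (φ (X (v m))) := by
  simp [genericFactor]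

theorem map_eval₂Hom_genericFactor {W : Type*} {v : B → W} {P : MvPolynomial σ L}
    (hP : P.support ⊆ B) (ψ : R →+* L) {y : W → L} (hy : ∀ m, y (v m) = coeff m P) :
    map (eval₂Hom ψ y) (genericFactor R B v) = P := by
  simp only [map_genericFactor, eval₂Hom_X', hy]
  rw [Finset.sum_coe_sort B fun m => monomial m (coeff m P)]
  conv_rhs => rw [as_sum P]
  exact (Finset.sum_subset hP fun m _ hm => by rw [notMem_support_iff.mp hm, monomial_zero]).symm

theorem forall_factorizationEquations_eq_zero_iff {F : MvPolynomial σ R}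
    (φ : MvPolynomial (B ⊕ B) R →+* L) :
    (∀ e ∈ factorizationEquations R B F, φ e = 0) ↔
      map φ (genericFactor R B Sum.inl) * map φ (genericFactor R B Sum.inr) =
        map (φ.comp C) F := by
  simp only [factorizationEquations, Set.forall_mem_range, ← coeff_map]
  rw [← eq_zero_iff, map_sub, map_mul, map_map, sub_eq_zero]

theorem exists_ringHom_of_mul_eq {F : MvPolynomial σ R} (ψ : R →+* L) {P Q : MvPolynomial σ L}
    (hP : P.support ⊆ B) (hQ : Q.support ⊆ B) (h : P * Q = map ψ F) :
    ∃ φ : MvPolynomial (B ⊕ B) R →+* L, φ.comp C = ψ ∧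
      (∀ e ∈ factorizationEquations R B F, φ e = 0) ∧
      map φ (genericFactor R B Sum.inl) = P ∧ map φ (genericFactor R B Sum.inr) = Q := by
  let y : B ⊕ B → L := Sum.elim (fun m => coeff m P) fun m => coeff m Q
  have hφP : map (eval₂Hom ψ y) (genericFactor R B Sum.inl) = P :=
    map_eval₂Hom_genericFactor hP ψ fun _ => rfl
  have hφQ : map (eval₂Hom ψ y) (genericFactor R B Sum.inr) = Q :=
    map_eval₂Hom_genericFactor hQ ψ fun _ => rfl
  refine ⟨eval₂Hom ψ y, eval₂Hom_comp_C ψ y, ?_, hφP, hφQ⟩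
  rw [forall_factorizationEquations_eq_zero_iff, hφP, hφQ, eval₂Hom_comp_C, h]

end GenericFactor

section Specialization

variable {W R : Type*} [CommRing R]

def HasSolutionOver {L : Type*} [CommRing L] (S : Set (MvPolynomial W R)) (c : MvPolynomial W R)
    (ψ : R →+* L) : Prop :=
  ∃ φ : MvPolynomial W R →+* L, φ.comp C = ψ ∧ (∀ e ∈ S, φ e = 0) ∧ φ c ≠ 0

theorem exists_C_mul_pow_mem_span_of_not_hasSolutionOver [IsDomain R] {Q Ω : Type*} [Field Q]
    [Algebra R Q] [IsFractionRing R Q] [Field Ω] [IsAlgClosed Ω] [Algebra Q Ω] [Algebra R Ω]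
    [IsScalarTower R Q Ω] [Finite W] {S : Set (MvPolynomial W R)} {c : MvPolynomial W R}
    (h : ¬HasSolutionOver S c (algebraMap R Ω)) :
    ∃ b ≠ (0 : R), ∃ k : ℕ, C b * c ^ k ∈ Ideal.span S := by
  let _ := algebraMvPolynomial (σ := W) (R := R) (S := Q)
  have hc : algebraMap _ (MvPolynomial W Q) c ∈
      ((Ideal.span S).map (algebraMap _ (MvPolynomial W Q))).radical := by
    rw [← vanishingIdeal_zeroLocus_eq_radical (K := Ω)]
    intro y hy
    rw [algebraMap_def, aeval_map_algebraMap]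
    by_contra hyc
    refine h ⟨(aeval y).toRingHom, (aeval y).comp_algebraMap, fun e he => ?_, hyc⟩
    have := hy _ (Ideal.mem_map_of_mem _ (Ideal.subset_span he))
    rwa [algebraMap_def, aeval_map_algebraMap] at this
  obtain ⟨k, hk⟩ := hc
  rw [← map_pow, IsLocalization.algebraMap_mem_map_algebraMap_iff
    ((nonZeroDivisors R).map (C : R →+* MvPolynomial W R))] at hk
  obtain ⟨_, ⟨b, hb, rfl⟩, hbk⟩ := hk
  exact ⟨b, nonZeroDivisors.ne_zero hb, k, hbk⟩

theorem apply_eq_zero_of_C_mul_pow_mem_span {L : Type*} [CommRing L] [IsDomain L]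
    {S : Set (MvPolynomial W R)} {c : MvPolynomial W R} {b : R} {k : ℕ}
    (hb : C b * c ^ k ∈ Ideal.span S) {ψ : R →+* L} (h : HasSolutionOver S c ψ) : ψ b = 0 := by
  obtain ⟨φ, rfl, hS, hc⟩ := h
  have : φ (C b * c ^ k) = 0 := (Ideal.span_le.mpr hS : _ ≤ RingHom.ker φ) hb
  simpa [hc] using this

theorem finite_setOf_hasSolutionOver_eval₂RingHom {K A Ω : Type*} [Field K] [Field A]
    [Algebra K A] [Field Ω] [IsAlgClosed Ω] [Algebra (RatFunc K) Ω] [Algebra (Polynomial K) Ω]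
    [IsScalarTower (Polynomial K) (RatFunc K) Ω] [Finite W]
    {S : Set (MvPolynomial W (Polynomial K))} {c : MvPolynomial W (Polynomial K)}
    (h : ¬HasSolutionOver S c (algebraMap (Polynomial K) Ω)) :
    {t : A | HasSolutionOver S c (Polynomial.eval₂RingHom (algebraMap K A) t)}.Finite := by
  obtain ⟨b, hb, k, hbk⟩ := exists_C_mul_pow_mem_span_of_not_hasSolutionOver (Q := RatFunc K) h
  refine (Polynomial.finite_setOfPred_isRoot
    ((Polynomial.map_ne_zero_iff (algebraMap K A).injective).mpr hb)).subset fun t ht => ?_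
  have := apply_eq_zero_of_C_mul_pow_mem_span hbk ht
  rwa [Polynomial.coe_eval₂RingHom, ← Polynomial.eval_map] at this

end Specialization

section Reducibility

variable {σ R L : Type*} [CommRing R] [Field L]

theorem not_irreducible_of_hasSolutionOver {B : Finset (σ →₀ ℕ)} {F : MvPolynomial σ R}
    {ψ : R →+* L} {m₁ m₂ : σ →₀ ℕ} (hm₁ : m₁ ≠ 0) (hm₂ : m₂ ≠ 0)
    (h : HasSolutionOver (factorizationEquations R B F)
      (coeff m₁ (genericFactor R B Sum.inl) * coeff m₂ (genericFactor R B Sum.inr)) ψ) :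
    ¬Irreducible (map ψ F) := by
  obtain ⟨φ, rfl, hS, hc⟩ := h
  rw [map_mul, ← coeff_map, ← coeff_map] at hc
  exact not_irreducible_of_mul_eq hm₁ (left_ne_zero_of_mul hc) hm₂ (right_ne_zero_of_mul hc)
    ((forall_factorizationEquations_eq_zero_iff φ).mp hS)

variable [Finite σ]

noncomputable def monomialsDegreeLE (σ : Type*) [Finite σ] (d : ℕ) : Finset (σ →₀ ℕ) :=
  (Finsupp.finite_of_degree_le d).toFinset

theorem support_subset_monomialsDegreeLE {P : MvPolynomial σ L} {d : ℕ}
    (hP : P.totalDegree ≤ d) : P.support ⊆ monomialsDegreeLE σ d := fun _ hm =>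
  (Set.Finite.mem_toFinset _).mpr ((le_totalDegree hm).trans hP)

theorem exists_hasSolutionOver_of_not_irreducible {F : MvPolynomial σ R} {ψ : R →+* L}
    (hpos : 0 < (map ψ F).totalDegree) (h : ¬Irreducible (map ψ F)) :
    ∃ m₁ ∈ monomialsDegreeLE σ F.totalDegree, ∃ m₂ ∈ monomialsDegreeLE σ F.totalDegree,
      m₁ ≠ 0 ∧ m₂ ≠ 0 ∧
      HasSolutionOver (factorizationEquations R (monomialsDegreeLE σ F.totalDegree) F)
        (coeff m₁ (genericFactor R _ Sum.inl) * coeff m₂ (genericFactor R _ Sum.inr)) ψ := by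
  obtain ⟨P, Q, hPQ, hP, hQ, ⟨m₁, hm₁, hPm₁⟩, ⟨m₂, hm₂, hQm₂⟩⟩ :=
    exists_mul_eq_of_not_irreducible hpos h
  have hPB := support_subset_monomialsDegreeLE (hP.trans (totalDegree_map_le ψ F))
  have hQB := support_subset_monomialsDegreeLE (hQ.trans (totalDegree_map_le ψ F))
  obtain ⟨φ, hφC, hS, rfl, rfl⟩ := exists_ringHom_of_mul_eq ψ hPB hQB hPQ
  refine ⟨m₁, hPB (mem_support_iff.mpr hPm₁), m₂, hQB (mem_support_iff.mpr hQm₂), hm₁, hm₂,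
    φ, hφC, hS, ?_⟩
  rw [map_mul, ← coeff_map, ← coeff_map]
  exact mul_ne_zero hPm₁ hQm₂

end Reducibility

theorem finite_setOf_not_irreducible_map_eval₂RingHom {σ K A Ω : Type*} [Finite σ] [Field K]
    [Field A] [Algebra K A] [Field Ω] [IsAlgClosed Ω] [Algebra (RatFunc K) Ω]
    [Algebra (Polynomial K) Ω] [IsScalarTower (Polynomial K) (RatFunc K) Ω]
    {F : MvPolynomial σ (Polynomial K)} (hF : Irreducible (map (algebraMap (Polynomial K) Ω) F)) :
    {t : A | 0 < (map (Polynomial.eval₂RingHom (algebraMap K A) t) F).totalDegree ∧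
      ¬Irreducible (map (Polynomial.eval₂RingHom (algebraMap K A) t) F)}.Finite := by
  set B := monomialsDegreeLE σ F.totalDegree
  have hfin : ∀ m ∈ (B ×ˢ B : Set _) ∩ {m | m.1 ≠ 0 ∧ m.2 ≠ 0},
      {t : A | HasSolutionOver (factorizationEquations _ B F)
        (coeff m.1 (genericFactor _ B Sum.inl) * coeff m.2 (genericFactor _ B Sum.inr))
        (Polynomial.eval₂RingHom (algebraMap K A) t)}.Finite :=
    fun m hm => finite_setOf_hasSolutionOver_eval₂RingHom fun h =>
      not_irreducible_of_hasSolutionOver hm.2.1 hm.2.2 h hF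
  refine (((B.finite_toSet.prod B.finite_toSet).inter_of_left _).biUnion hfin).subset
    fun t ⟨hpos, hirr⟩ => ?_
  obtain ⟨m₁, hm₁, m₂, hm₂, hm₁0, hm₂0, h⟩ := exists_hasSolutionOver_of_not_irreducible hpos hirr
  exact Set.mem_biUnion (x := (m₁, m₂)) ⟨⟨hm₁, hm₂⟩, hm₁0, hm₂0⟩ h

theorem map_map_C_sub_C_X_mul_map_C {σ R L : Type*} [CommRing R] [CommRing L]
    (f g : MvPolynomial σ R) (ψ : Polynomial R →+* L) :
    map ψ (map Polynomial.C f - C Polynomial.X * map Polynomial.C g) =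
      map (ψ.comp Polynomial.C) f - C (ψ Polynomial.X) * map (ψ.comp Polynomial.C) g := by
  simp [map_map]

end MvPolynomial

theorem stmt_10_general {K : Type*} [Field K] {n : ℕ}
    (f g : MvPolynomial (Fin n) K)
    (hnc : ¬ (f.totalDegree = 0 ∧ g.totalDegree = 0))
    (d : ℕ) (hd : d = max f.totalDegree g.totalDegree)
    (hirr : Irreducible
      (MvPolynomial.map ((algebraMap (RatFunc K) (AlgebraicClosure (RatFunc K))).comp
          (algebraMap K (RatFunc K))) f
        - MvPolynomial.C (algebraMap (RatFunc K) (AlgebraicClosure (RatFunc K)) RatFunc.X) *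
          MvPolynomial.map ((algebraMap (RatFunc K) (AlgebraicClosure (RatFunc K))).comp
            (algebraMap K (RatFunc K))) g)) :
    Set.Finite {lam : AlgebraicClosure K |
      ¬ ((MvPolynomial.map (algebraMap K (AlgebraicClosure K)) f
            - MvPolynomial.C lam * MvPolynomial.map (algebraMap K (AlgebraicClosure K)) g
            ).totalDegree = d ∧
          Irreducible (MvPolynomial.map (algebraMap K (AlgebraicClosure K)) f
            - MvPolynomial.C lam *
              MvPolynomial.map (algebraMap K (AlgebraicClosure K)) g))} := by
  set F := map Polynomial.C f - C Polynomial.X * map Polynomial.C g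
  have hFΩ : Irreducible (map (algebraMap (Polynomial K) (AlgebraicClosure (RatFunc K))) F) := by
    have hC : (algebraMap (Polynomial K) (RatFunc K)).comp Polynomial.C = algebraMap K _ :=
      RingHom.ext fun a => by simp [RatFunc.algebraMap_eq_C]
    rwa [map_map_C_sub_C_X_mul_map_C, IsScalarTower.algebraMap_eq (Polynomial K) (RatFunc K),
      RingHom.comp_assoc, hC, RingHom.comp_apply, RatFunc.algebraMap_X]
  have hspec : ∀ t : AlgebraicClosure K, map (Polynomial.eval₂RingHom (algebraMap K _) t) F =
      map (algebraMap K _) f - C t * map (algebraMap K _) g := fun t => by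
    have hC : (Polynomial.eval₂RingHom (algebraMap K _) t).comp Polynomial.C = algebraMap K _ :=
      RingHom.ext fun a => Polynomial.eval₂_C _ _
    rw [map_map_C_sub_C_X_mul_map_C, hC, Polynomial.coe_eval₂RingHom, Polynomial.eval₂_X]
  have hdeg := subsingleton_setOf_totalDegree_sub_C_mul_ne
    (map (algebraMap K (AlgebraicClosure K)) f) (map (algebraMap K (AlgebraicClosure K)) g)
  rw [totalDegree_map_of_injective (algebraMap K _).injective,
    totalDegree_map_of_injective (algebraMap K _).injective, ← hd] at hdeg
  have hred := finite_setOf_not_irreducible_map_eval₂RingHom (A := AlgebraicClosure K) hFΩ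
  simp only [hspec] at hred
  refine (hdeg.finite.union hred).subset fun t ht => ?_
  by_cases htd : (map (algebraMap K _) f - C t * map (algebraMap K _) g).totalDegree = d
  · exact Or.inr ⟨by omega, fun hi => ht ⟨htd, hi⟩⟩
  · exact Or.inl htd

/-- In characteristic zero, if `f - T·g` is irreducible over the algebraic closure `Ω`
of `K(T)`, then for all but finitely many `λ` in the algebraic closure of `K` the
polynomial `f - λ·g` is irreducible of degree `d = max(deg f, deg g)`. -/
theorem stmt_10 {K : Type*} [Field K] [CharZero K] {n : ℕ}
    (f g : MvPolynomial (Fin n) K) (hfg : IsRelPrime f g)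
    (hnc : ¬ (f.totalDegree = 0 ∧ g.totalDegree = 0))
    (d : ℕ) (hd : d = max f.totalDegree g.totalDegree)
    (hirr : Irreducible
      (MvPolynomial.map ((algebraMap (RatFunc K) (AlgebraicClosure (RatFunc K))).comp
          (algebraMap K (RatFunc K))) f
        - MvPolynomial.C (algebraMap (RatFunc K) (AlgebraicClosure (RatFunc K)) RatFunc.X) *
          MvPolynomial.map ((algebraMap (RatFunc K) (AlgebraicClosure (RatFunc K))).comp
            (algebraMap K (RatFunc K))) g)) :
    Set.Finite {lam : AlgebraicClosure K |
      ¬ ((MvPolynomial.map (algebraMap K (AlgebraicClosure K)) f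
            - MvPolynomial.C lam * MvPolynomial.map (algebraMap K (AlgebraicClosure K)) g
            ).totalDegree = d ∧
          Irreducible (MvPolynomial.map (algebraMap K (AlgebraicClosure K)) f
            - MvPolynomial.C lam *
              MvPolynomial.map (algebraMap K (AlgebraicClosure K)) g))} :=
  stmt_10_general f g hnc d hd hirr
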